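/- If (F_i, v) is a counterfactual cause for entity e⋆ (i.e., L(e⋆) = 1 and L(e⋆[F_i := v]) = 0), and the probability space Ω assigns positive probability to the event {e : e_{F∖{F_i}} = e⋆_{F∖{F_i}} and e_{F_i} = v}, then COUNTER(e⋆, F_i) > 0. -/
import Mathlib


open Finset

variable {n : ℕ} {D : Fin n → Type} [∀ i, Fintype (D i)] [∀ i, DecidableEq (D i)]

/-- Conditional expectation of `L` given agreement with `eStar` on the features in `S`,
with respect to the probability mass function `w` on entities. -/
noncomputable def condExp (w L : (∀ i, D i) → ℝ) (eStar : ∀ i, D i) (S : Finset (Fin n)) : ℝ :=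
  (∑ e ∈ univ.filter (fun e => ∀ i ∈ S, e i = eStar i), w e * L e) /
  (∑ e ∈ univ.filter (fun e => ∀ i ∈ S, e i = eStar i), w e)

/-- The contribution `c(e⋆, F_i, π)` of feature `i` under the permutation `π`,
where feature `j` occupies position `π j`. -/
noncomputable def contrib (w L : (∀ i, D i) → ℝ) (eStar : ∀ i, D i) (i : Fin n)
    (π : Equiv.Perm (Fin n)) : ℝ :=
  condExp w L eStar (univ.filter fun j => π j ≤ π i) -
  condExp w L eStar (univ.filter fun j => π j < π i)

/-- The SHAP score of feature `i`: the average contribution over all permutations. -/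
noncomputable def shap (w L : (∀ i, D i) → ℝ) (eStar : ∀ i, D i) (i : Fin n) : ℝ :=
  (Nat.factorial n : ℝ)⁻¹ * ∑ π : Equiv.Perm (Fin n), contrib w L eStar i π

/-- The COUNTER score of feature `i`:
`COUNTER(e⋆, F_i) = L(e⋆) − E[L(e) | e_{F∖{F_i}} = e⋆_{F∖{F_i}}]`. -/
noncomputable def counter (w L : (∀ i, D i) → ℝ) (eStar : ∀ i, D i) (i : Fin n) : ℝ :=
  L eStar - condExp w L eStar (univ.erase i)

/-- If `(F_i, v)` is a counterfactual cause for `e⋆` (i.e. `L(e⋆) = 1` and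
`L(e⋆[F_i := v]) = 0`) and `Ω` gives positive probability to the entity obtained by
setting `F_i := v` in `e⋆`, then `COUNTER(e⋆, F_i) > 0`. -/
theorem counter_pos_of_counterfactual_cause (w L : (∀ i, D i) → ℝ)
    (hw : ∀ e, 0 ≤ w e) (hL : ∀ e, L e = 0 ∨ L e = 1)
    (eStar : ∀ i, D i) (i : Fin n) (v : D i)
    (h1 : L eStar = 1) (h0 : L (Function.update eStar i v) = 0)
    (hv : 0 < w (Function.update eStar i v)) :
    0 < counter w L eStar i := by
  unfold counter condExp
  rw [h1]
  set A := univ.filter (fun (e : ∀ j, D j) => ∀ j ∈ univ.erase i, e j = eStar j) with hA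
  have hmem : Function.update eStar i v ∈ A := by
    simp only [hA, mem_filter, mem_univ, true_and, mem_erase]
    rintro j ⟨hj, -⟩
    exact Function.update_of_ne hj v eStar
  have hdenom : 0 < ∑ e ∈ A, w e := by
    have := Finset.single_le_sum (f := w) (fun e _ => hw e) hmem
    linarith
  have hnum : (∑ e ∈ A, w e * L e) < ∑ e ∈ A, w e := by
    apply Finset.sum_lt_sum
    · intro e _
      rcases hL e with h | h <;> simp [h] <;> exact hw e
    · exact ⟨_, hmem, by rw [h0, mul_zero]; exact hv⟩
  have : (∑ e ∈ A, w e * L e) / (∑ e ∈ A, w e) < 1 := (div_lt_one hdenom).mpr hnum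
  linarith
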